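/- Let G_RB^k be a partial reduction of a maximal connected graph with C_R ≠ ∅, C_I = ∅ and C_U = ∅. Then every character in C_C is safe, i.e., its realization yields a reducible red-black graph. -/

import Mathlib

open Classical

/-- A red-black graph: a bipartite graph on characters `C` and species `S`
with edges colored black or red. -/
structure RBGraph (S C : Type) where
  black : C → S → Prop
  red : C → S → Prop

namespace RBGraph

variable {S C : Type}

/-- `c` and `s` are adjacent (by an edge of either color). -/
def adj (G : RBGraph S C) (c : C) (s : S) : Prop := G.black c s ∨ G.red c s

/-- The underlying simple graph on `S ⊕ C`. -/
def toSimple (G : RBGraph S C) : SimpleGraph (S ⊕ C) where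
  Adj x y := (∃ s c, x = Sum.inl s ∧ y = Sum.inr c ∧ G.adj c s) ∨
             (∃ s c, x = Sum.inr c ∧ y = Sum.inl s ∧ G.adj c s)
  symm := by
    constructor
    rintro x y (⟨s, c, rfl, rfl, h⟩ | ⟨s, c, rfl, rfl, h⟩)
    · exact Or.inr ⟨s, c, rfl, rfl, h⟩
    · exact Or.inl ⟨s, c, rfl, rfl, h⟩
  loopless := by
    constructor
    rintro x (⟨s, c, rfl, h, -⟩ | ⟨s, c, rfl, h, -⟩) <;> simp at h

/-- `s` lies in the connected component of `c`. -/
def sameComp (G : RBGraph S C) (c : C) (s : S) : Prop :=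
  G.toSimple.Reachable (Sum.inr c) (Sum.inl s)

/-- A character is active if it is incident to a red edge. -/
def active (G : RBGraph S C) (c : C) : Prop := ∃ s, G.red c s

/-- A character is inactive if it is incident to no red edge. -/
def inactive (G : RBGraph S C) (c : C) : Prop := ¬ G.active c

/-- A character adjacent via red edges to all species of its connected component. -/
def redUniversal (G : RBGraph S C) (c : C) : Prop :=
  G.active c ∧ ∀ s, G.sameComp c s → G.red c s

/-- Remove all edges of red-universal characters (one round). -/
def pruneStep (G : RBGraph S C) : RBGraph S C :=
  ⟨fun c s => G.black c s ∧ ¬ G.redUniversal c,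
   fun c s => G.red c s ∧ ¬ G.redUniversal c⟩

/-- Repeatedly remove all edges of red-universal characters. -/
def prune [Fintype C] (G : RBGraph S C) : RBGraph S C :=
  pruneStep^[Fintype.card C] G

/-- Realization of a character `c`: add red edges from `c` to the species of its
connected component not adjacent to `c`, delete the black edges of `c`, then
repeatedly remove the edges of red-universal characters. -/
def realize [Fintype C] (G : RBGraph S C) (c : C) : RBGraph S C :=
  prune ⟨fun c' s => G.black c' s ∧ c' ≠ c,
         fun c' s => G.red c' s ∨ (c' = c ∧ ¬ G.black c s ∧ G.sameComp c s)⟩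

/-- Realize a sequence of characters in order. -/
def realizeSeq [Fintype C] (G : RBGraph S C) (l : List C) : RBGraph S C :=
  l.foldl realize G

/-- The graph has no edges. -/
def edgeless (G : RBGraph S C) : Prop := ∀ c s, ¬ G.adj c s

/-- A red Σ-graph: an induced all-red path `s1 - c1 - s2 - c2 - s3`. -/
def redSigma (G : RBGraph S C) : Prop :=
  ∃ (c1 c2 : C) (s1 s2 s3 : S), c1 ≠ c2 ∧ s1 ≠ s2 ∧ s2 ≠ s3 ∧ s1 ≠ s3 ∧
    G.red c1 s1 ∧ G.red c1 s2 ∧ G.red c2 s2 ∧ G.red c2 s3 ∧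
    ¬ G.adj c1 s3 ∧ ¬ G.adj c2 s1

/-- A reduction of a red-black graph: an ordering of its (non-isolated) inactive
characters whose successive realizations yield an edgeless graph, never creating
a red Σ-graph. -/
def isReductionFrom [Fintype C] (G : RBGraph S C) (l : List C) : Prop :=
  l.Nodup ∧ (∀ c, G.inactive c → (∃ s, G.black c s) → c ∈ l) ∧
  (∀ c ∈ l, G.inactive c) ∧
  edgeless (realizeSeq G l) ∧
  ∀ k ≤ l.length, ¬ redSigma (realizeSeq G (l.take k))

/-- A red-black graph is reducible if it admits a reduction. -/
def reducible [Fintype C] (G : RBGraph S C) : Prop := ∃ l, isReductionFrom G l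

/-- A character is safe if its realization yields a reducible red-black graph. -/
def safe [Fintype C] (G : RBGraph S C) (c : C) : Prop := reducible (G.realize c)

/-- The (all-black) red-black graph of a binary species-character matrix. -/
def ofMatrix (M : C → S → Prop) : RBGraph S C := ⟨M, fun _ _ => False⟩

/-- A reduction of the graph of a matrix: an ordering of all characters whose
successive realizations yield an edgeless graph, never creating a red Σ-graph. -/
def isReduction [Fintype C] (M : C → S → Prop) (l : List C) : Prop :=
  l.Nodup ∧ (∀ c, c ∈ l) ∧ edgeless (realizeSeq (ofMatrix M) l) ∧
  ∀ k ≤ l.length, ¬ redSigma (realizeSeq (ofMatrix M) (l.take k))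

/-- The partial reduction after realizing the first `t` characters of `l`. -/
def partialRed [Fintype C] (M : C → S → Prop) (l : List C) (t : ℕ) : RBGraph S C :=
  realizeSeq (ofMatrix M) (l.take t)

/-- The matrix is maximal: no character's species set is contained in that of
another character. -/
def MaximalM (M : C → S → Prop) : Prop :=
  ∀ c1 c2 : C, c1 ≠ c2 → ¬ (∀ s, M c1 s → M c2 s)

/-- A vertex is non-isolated if it has an incident edge. -/
def nonIsolated (G : RBGraph S C) : S ⊕ C → Prop
  | Sum.inl s => ∃ c, G.adj c s
  | Sum.inr c => ∃ s, G.adj c s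

/-- The graph has a single connected component (ignoring isolated vertices). -/
def singleComponent (G : RBGraph S C) : Prop :=
  ∀ x y, G.nonIsolated x → G.nonIsolated y → G.toSimple.Reachable x y

/-- Species incident only to black edges (and at least one of them). -/
def SB (G : RBGraph S C) : Set S := {s | (∃ c, G.black c s) ∧ ∀ c, ¬ G.red c s}

/-- Species incident to at least one red edge. -/
def SR (G : RBGraph S C) : Set S := {s | ∃ c, G.red c s}

/-- Inactive characters whose neighborhood is contained in `S_R`. -/
def CC (G : RBGraph S C) : Set C :=
  {c | G.inactive c ∧ (∃ s, G.black c s) ∧ ∀ s, G.black c s → s ∈ G.SR}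

/-- Inactive characters with a neighbor and a non-neighbor in `S_R`. -/
def CI (G : RBGraph S C) : Set C :=
  {c | G.inactive c ∧ (∃ s ∈ G.SR, G.black c s) ∧ (∃ s ∈ G.SR, ¬ G.black c s)}

/-- Inactive characters with a neighbor in `S_B` that are universal on `S_R`. -/
def CU (G : RBGraph S C) : Set C :=
  {c | G.inactive c ∧ (∃ s ∈ G.SB, G.black c s) ∧ ∀ s ∈ G.SR, G.black c s}

/-- The subgraph induced by a set of characters and a set of species. -/
def induced (G : RBGraph S C) (Cs : Set C) (Ss : Set S) : RBGraph S C :=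
  ⟨fun c s => G.black c s ∧ c ∈ Cs ∧ s ∈ Ss,
   fun c s => G.red c s ∧ c ∈ Cs ∧ s ∈ Ss⟩

/-- `c2` is the center of an induced path on four species and three characters. -/
def isP7Center (M : C → S → Prop) (c2 : C) : Prop :=
  ∃ (c1 c3 : C) (s1 s2 s3 s4 : S),
    c1 ≠ c2 ∧ c2 ≠ c3 ∧ c1 ≠ c3 ∧
    s1 ≠ s2 ∧ s1 ≠ s3 ∧ s1 ≠ s4 ∧ s2 ≠ s3 ∧ s2 ≠ s4 ∧ s3 ≠ s4 ∧
    M c1 s1 ∧ M c1 s2 ∧ M c2 s2 ∧ M c2 s3 ∧ M c3 s3 ∧ M c3 s4 ∧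
    ¬ M c1 s3 ∧ ¬ M c1 s4 ∧ ¬ M c2 s1 ∧ ¬ M c2 s4 ∧ ¬ M c3 s1 ∧ ¬ M c3 s2

/-- Minimum-degree species none of whose characters is the center of an induced `P7`. -/
def S7m (M : C → S → Prop) : Set S :=
  {s | (∀ s', {c | M c s}.ncard ≤ {c | M c s'}.ncard) ∧
       ∀ c, M c s → ¬ isP7Center M c}

/-- The species of `S_B` not adjacent to `cm`. -/
def SBm (G : RBGraph S C) (cm : C) : Set S := {s | s ∈ G.SB ∧ ¬ G.black cm s}

/-- `C_I` together with the characters of `C_U` with a neighbor in `S_B^m`. -/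
def CBm (G : RBGraph S C) (cm : C) : Set C :=
  G.CI ∪ {c ∈ G.CU | ∃ s ∈ G.SBm cm, G.black c s}

end RBGraph

/-!
Let `R = S_R` be the red species of `G_k`. Active characters carry only red edges, and since
`C_I = C_U = ∅` every inactive character touching `R` is black-adjacent to all of `R`, while no
character has neighbours both inside and outside `R`. A character `c ∈ C_C` is therefore
black-universal on `R`, and `R` contains its whole component: realizing `c` adds no red edge and
only deletes its black edges.

Compare the run `A`, which realizes `c` first and then the remaining characters of the given
reduction in their order (skipping `c`), with the original run `B`. At every stage `A` is `B`
without the black edges of `c`, except that some characters whose red neighbourhood lies in `R`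
may already have been removed in `A`. Outside `R` the two graphs agree, so components of
characters living outside `R` coincide and the realizations of those characters add the same red
edges in both runs; inside `R` every remaining inactive character is black-universal, so its
realization adds no red edge in either run. Hence `A` never has a red Σ-graph that `B` lacks and
ends edgeless with `B`.
-/

theorem SimpleGraph.Reachable.induction_adj {V : Type*} {G : SimpleGraph V} {P : V → Prop}
    (hP : ∀ x y, G.Adj x y → P x → P y) {x y : V} (h : G.Reachable x y) (hx : P x) : P y := by
  rw [SimpleGraph.reachable_iff_reflTransGen] at h
  induction h with
  | refl => exact hx
  | tail _ hadj ih => exact hP _ _ hadj ih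

namespace RBGraph

variable {S C : Type}

def addsRed (G : RBGraph S C) (d : C) (s : S) : Prop := ¬ G.black d s ∧ G.sameComp d s

def preRealize (G : RBGraph S C) (d : C) : RBGraph S C :=
  ⟨fun u s => G.black u s ∧ u ≠ d, fun u s => G.red u s ∨ (u = d ∧ G.addsRed d s)⟩

def pruned (G : RBGraph S C) : Prop := ∀ u, ¬ G.redUniversal u

def monochromatic (G : RBGraph S C) : Prop := ∀ u s s', G.red u s → ¬ G.black u s'

def saturated (R : Set S) (G : RBGraph S C) : Prop :=
  ∀ u s s', G.adj u s → G.adj u s' → s ∈ R → s' ∈ R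

def reduces [Fintype C] (G : RBGraph S C) (l : List C) : Prop :=
  edgeless (realizeSeq G l) ∧ ∀ i, ¬ redSigma (realizeSeq G (l.take i))

section Basic

variable {G : RBGraph S C} {u d : C} {s : S}

lemma toSimple_adj_inl (h : G.adj u s) : G.toSimple.Adj (.inl s) (.inr u) :=
  Or.inl ⟨s, u, rfl, rfl, h⟩

lemma toSimple_adj_inr (h : G.adj u s) : G.toSimple.Adj (.inr u) (.inl s) :=
  Or.inr ⟨s, u, rfl, rfl, h⟩

lemma toSimple_mono {G' : RBGraph S C} (h : ∀ u s, G.adj u s → G'.adj u s) :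
    G.toSimple ≤ G'.toSimple := by
  rintro x y (⟨s, u, rfl, rfl, ha⟩ | ⟨s, u, rfl, rfl, ha⟩)
  · exact toSimple_adj_inl (h u s ha)
  · exact toSimple_adj_inr (h u s ha)

lemma redUniversal_of_le {G' : RBGraph S C} (hle : G.toSimple ≤ G'.toSimple)
    (hred : ∀ s, G.red u s ↔ G'.red u s) (h : G'.redUniversal u) : G.redUniversal u := by
  obtain ⟨⟨s₀, hs₀⟩, hall⟩ := h
  exact ⟨⟨s₀, (hred s₀).2 hs₀⟩, fun s hs => (hred s).2 (hall s (hs.mono hle))⟩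

lemma not_redUniversal_of_black (hG : G.monochromatic) (hb : G.black u s) :
    ¬ G.redUniversal u :=
  fun ⟨⟨_, ht⟩, _⟩ => hG _ _ _ ht hb

lemma pruneStep_adj (h : (pruneStep G).adj u s) : G.adj u s :=
  h.imp And.left And.left

lemma pruneStep_eq_self (h : G.pruned) : pruneStep G = G := by
  obtain ⟨b, r⟩ := G
  simp only [pruneStep, RBGraph.mk.injEq]
  exact ⟨funext₂ fun u _ => propext (and_iff_left (h u)),
    funext₂ fun u _ => propext (and_iff_left (h u))⟩

lemma pruned_ofMatrix (M : C → S → Prop) : (ofMatrix M).pruned :=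
  fun _ ⟨⟨_, h⟩, _⟩ => h

lemma inactive_pruneStep (h : G.inactive u) : (pruneStep G).inactive u :=
  fun ⟨s, hs⟩ => h ⟨s, hs.1⟩

lemma preRealize_red_of_ne (hu : u ≠ d) : (G.preRealize d).red u s ↔ G.red u s :=
  or_iff_left fun h => hu h.1

lemma preRealize_red_self (hd : G.inactive d) : (G.preRealize d).red d s ↔ G.addsRed d s :=
  ⟨fun h => h.elim (fun h => absurd ⟨s, h⟩ hd) And.right, fun h => Or.inr ⟨rfl, h⟩⟩

lemma preRealize_red_of_not_addsRed (hd : ∀ s, ¬ G.addsRed d s) :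
    (G.preRealize d).red u s ↔ G.red u s :=
  or_iff_left fun h => hd s h.2

lemma preRealize_adj_of_ne (hu : u ≠ d) (h : (G.preRealize d).adj u s) : G.adj u s :=
  h.imp And.left (preRealize_red_of_ne hu).1

lemma preRealize_adj_self (hd : G.inactive d) (h : (G.preRealize d).adj d s) : G.addsRed d s :=
  (preRealize_red_self hd).1 (h.resolve_left fun hb => hb.2 rfl)

end Basic

section Prune

variable [Fintype C] {G : RBGraph S C} {u d : C} {s : S}

lemma prune_black (h : (prune G).black u s) : G.black u s :=
  Function.Iterate.rec (fun H : RBGraph S C => ∀ {u s}, H.black u s → G.black u s)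
    (f := pruneStep) id (fun _ ih _ _ h => ih h.1) _ h

lemma prune_red (h : (prune G).red u s) : G.red u s :=
  Function.Iterate.rec (fun H : RBGraph S C => ∀ {u s}, H.red u s → G.red u s)
    (f := pruneStep) id (fun _ ih _ _ h => ih h.1) _ h

lemma prune_eq_self (h : G.pruned) : prune G = G :=
  Function.iterate_fixed (pruneStep_eq_self h) _

/-- Each round of pruning strictly decreases the number of active characters, until none is
red-universal. -/
lemma pruned_iterate_pruneStep :
    ∀ n (G : RBGraph S C), (Finset.univ.filter G.active).card ≤ n →
      (pruneStep^[n] G).pruned := by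
  intro n
  induction n with
  | zero =>
    intro G hcard u hu
    have : u ∈ Finset.univ.filter G.active := Finset.mem_filter.2 ⟨Finset.mem_univ _, hu.1⟩
    simp_all
  | succ n ih =>
    intro G hcard
    by_cases hG : G.pruned
    · rwa [Function.iterate_fixed (pruneStep_eq_self hG)]
    · obtain ⟨u, hu⟩ : ∃ u, G.redUniversal u := by simpa [pruned] using hG
      have hsub : Finset.univ.filter (pruneStep G).active ⊂ Finset.univ.filter G.active := by
        refine (Finset.ssubset_iff_of_subset ?_).2 ⟨u, ?_, ?_⟩
        · intro v
          simp only [Finset.mem_filter, Finset.mem_univ, true_and]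
          exact fun ⟨s, hs⟩ => ⟨s, hs.1⟩
        · simpa using hu.1
        · simp only [Finset.mem_filter, Finset.mem_univ, true_and]
          exact fun ⟨s, hs⟩ => hs.2 hu
      rw [Function.iterate_succ_apply]
      exact ih _ (Nat.le_of_lt_succ ((Finset.card_lt_card hsub).trans_le hcard))

lemma pruned_prune (G : RBGraph S C) : (prune G).pruned :=
  pruned_iterate_pruneStep _ G ((Finset.card_filter_le _ _).trans Finset.card_univ.le)

lemma pruned_realize (G : RBGraph S C) (d : C) : (G.realize d).pruned :=
  pruned_prune _

lemma pruned_realizeSeq : ∀ (t : List C) {G : RBGraph S C}, G.pruned → (realizeSeq G t).pruned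
  | [], _, h => h
  | d :: t, G, _ => pruned_realizeSeq t (pruned_realize G d)

end Prune

section Realize

variable [Fintype C] {G : RBGraph S C} {u d : C} {s : S}

lemma realize_black (h : (G.realize d).black u s) : G.black u s ∧ u ≠ d :=
  prune_black h

lemma realize_red (h : (G.realize d).red u s) : G.red u s ∨ (u = d ∧ G.addsRed d s) :=
  prune_red h

lemma realizeSeq_append (t₁ t₂ : List C) :
    realizeSeq G (t₁ ++ t₂) = realizeSeq (realizeSeq G t₁) t₂ :=
  List.foldl_append

lemma black_of_black_realizeSeq :
    ∀ {t : List C} {G : RBGraph S C}, (realizeSeq G t).black u s → G.black u s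
  | [], _, h => h
  | _ :: _, _, h => (realize_black (black_of_black_realizeSeq h)).1

lemma not_black_realizeSeq_of_mem :
    ∀ {t : List C} {G : RBGraph S C}, u ∈ t → ¬ (realizeSeq G t).black u s
  | d :: t, G, hu, hb => by
    rcases List.mem_cons.1 hu with rfl | hu
    · exact (realize_black (black_of_black_realizeSeq hb)).2 rfl
    · exact not_black_realizeSeq_of_mem hu hb

lemma inactive_realizeSeq_of_not_mem :
    ∀ {t : List C} {G : RBGraph S C}, u ∉ t → G.inactive u → (realizeSeq G t).inactive u
  | [], _, _, h => h
  | d :: t, G, hu, h => by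
    refine inactive_realizeSeq_of_not_mem (t := t) (G := G.realize d)
      (fun h => hu (List.mem_cons_of_mem d h)) ?_
    rintro ⟨s, hs⟩
    rcases realize_red hs with hr | ⟨rfl, -⟩
    · exact h ⟨s, hr⟩
    · exact hu List.mem_cons_self

end Realize

section Monochromatic

variable {G : RBGraph S C}

lemma monochromatic.pruneStep (h : G.monochromatic) : (pruneStep G).monochromatic :=
  fun u s s' hr hb => h u s s' hr.1 hb.1

lemma monochromatic.prune [Fintype C] (h : G.monochromatic) : (prune G).monochromatic :=
  Function.Iterate.rec (fun H : RBGraph S C => H.monochromatic) (f := RBGraph.pruneStep) h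
    (fun _ => monochromatic.pruneStep) _

lemma monochromatic.preRealize (h : G.monochromatic) (d : C) :
    (G.preRealize d).monochromatic := by
  rintro u s s' (hr | ⟨rfl, -⟩) hb
  · exact h u s s' hr hb.1
  · exact hb.2 rfl

lemma monochromatic.realizeSeq [Fintype C] :
    ∀ (t : List C) {G : RBGraph S C}, G.monochromatic → (realizeSeq G t).monochromatic
  | [], _, h => h
  | d :: t, _, h => monochromatic.realizeSeq t ((h.preRealize d).prune)

lemma monochromatic_ofMatrix (M : C → S → Prop) : (ofMatrix M).monochromatic :=
  fun _ _ _ h => h.elim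

end Monochromatic

section Saturated

variable {R : Set S} {G : RBGraph S C} {d : C} {s : S}

lemma saturated.mono {G' : RBGraph S C} (h : saturated R G)
    (hle : ∀ u s, G'.adj u s → G.adj u s) : saturated R G' :=
  fun u s s' ha ha' hs => h u s s' (hle u s ha) (hle u s' ha') hs

lemma saturated.compl (h : saturated R G) : saturated Rᶜ G :=
  fun u s s' ha ha' hs hs' => hs (h u s' s ha' ha hs')

lemma saturated.mem_of_sameComp (h : saturated R G) (hd : ∀ s, G.adj d s → s ∈ R)
    (hs : G.sameComp d s) : s ∈ R := by
  refine SimpleGraph.Reachable.induction_adj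
    (P := fun x => match x with
      | .inl s => s ∈ R
      | .inr u => ∀ s, G.adj u s → s ∈ R) ?_ hs hd
  rintro x y (⟨s', u, rfl, rfl, hadj⟩ | ⟨s', u, rfl, rfl, hadj⟩) hx
  · exact fun s'' h'' => h u s' s'' hadj h'' hx
  · exact hx s' hadj

lemma saturated.not_addsRed (h : saturated R G) (hd : ∀ s, G.adj d s → s ∈ R)
    (hfull : ∀ s ∈ R, G.black d s) : ¬ G.addsRed d s :=
  fun ⟨hnb, hsc⟩ => hnb (hfull s (h.mem_of_sameComp hd hsc))

lemma black_full_of_CI_eq_empty (hG : G.monochromatic) (hCI : G.CI = ∅) {u : C} {s s' : S}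
    (hb : G.black u s) (hs : s ∈ G.SR) (hs' : s' ∈ G.SR) : G.black u s' := by
  by_contra hnb
  have hu : u ∈ G.CI := ⟨fun ⟨_, ht⟩ => hG _ _ _ ht hb, ⟨s, hs, hb⟩, ⟨s', hs', hnb⟩⟩
  simp [hCI] at hu

lemma saturated_SR (hG : G.monochromatic) (hCI : G.CI = ∅) (hCU : G.CU = ∅) :
    saturated G.SR G := by
  intro u s s' ha ha' hs
  rcases ha' with hb' | hr'
  · have hu : G.inactive u := fun ⟨_, ht⟩ => hG _ _ _ ht hb'
    have hb : G.black u s := ha.resolve_right fun hr => hu ⟨s, hr⟩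
    by_contra hs'
    have hSB : s' ∈ G.SB := ⟨⟨u, hb'⟩, fun v hv => hs' ⟨v, hv⟩⟩
    have hCU' : u ∈ G.CU :=
      ⟨hu, ⟨s', hSB, hb'⟩, fun t ht => black_full_of_CI_eq_empty hG hCI hb hs ht⟩
    simp [hCU] at hCU'
  · exact ⟨u, hr'⟩

end Saturated

/-- What the original run `B` satisfies while the characters `rem` remain to be realized, `R`
being `S_R` of the partial reduction it started from. -/
structure RunInv (c₀ : C) (R : Set S) (B : RBGraph S C) (rem : List C) : Prop where
  sat : saturated R B
  mono : B.monochromatic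
  black_full : ∀ u s s', B.black u s → s ∈ R → s' ∈ R → B.black u s'
  c_black : ∀ s, B.black c₀ s → s ∈ R
  c_inactive : B.inactive c₀
  c_full : c₀ ∈ rem → ∀ s ∈ R, B.black c₀ s
  rem_inactive : ∀ d ∈ rem, B.inactive d

namespace RunInv

variable {c₀ d : C} {R : Set S} {B : RBGraph S C} {rem t : List C} {s : S}

lemma c_adj (h : RunInv c₀ R B rem) (ha : B.adj c₀ s) : s ∈ R :=
  h.c_black s (ha.resolve_right fun hr => h.c_inactive ⟨s, hr⟩)

lemma pruneStep (h : RunInv c₀ R B rem) : RunInv c₀ R (pruneStep B) rem where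
  sat := h.sat.mono fun _ _ => pruneStep_adj
  mono := h.mono.pruneStep
  black_full u s s' hb hs hs' := ⟨h.black_full u s s' hb.1 hs hs', hb.2⟩
  c_black s hb := h.c_black s hb.1
  c_inactive := inactive_pruneStep h.c_inactive
  c_full hc s hs := ⟨h.c_full hc s hs, not_redUniversal_of_black h.mono (h.c_full hc s hs)⟩
  rem_inactive d hd := inactive_pruneStep (h.rem_inactive d hd)

lemma prune [Fintype C] (h : RunInv c₀ R B rem) : RunInv c₀ R (prune B) rem :=
  Function.Iterate.rec (fun H => RunInv c₀ R H rem) (f := RBGraph.pruneStep) h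
    (fun _ => RunInv.pruneStep) _

lemma c_not_addsRed (h : RunInv c₀ R B rem) (hc : c₀ ∈ rem) : ¬ B.addsRed c₀ s :=
  h.sat.not_addsRed (fun _ => h.c_adj) (h.c_full hc)

lemma not_addsRed_or_adj_not_mem (h : RunInv c₀ R B rem) (hd : B.inactive d) :
    (∀ s, ¬ B.addsRed d s) ∨ ∀ s, B.adj d s → s ∉ R := by
  have hblack : ∀ {s}, B.adj d s → B.black d s := fun ha => ha.resolve_right fun hr => hd ⟨_, hr⟩
  by_cases hR : ∃ s₀ ∈ R, B.black d s₀
  · obtain ⟨s₀, hs₀, hb₀⟩ := hR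
    exact Or.inl fun s => h.sat.not_addsRed (fun s ha => h.sat d s₀ s (.inl hb₀) ha hs₀)
      (fun s hs => h.black_full d s₀ s hb₀ hs₀ hs)
  · push Not at hR
    exact Or.inr fun s ha hs => hR s hs (hblack ha)

lemma addsRed_not_mem (h : RunInv c₀ R B rem) (hd : B.inactive d) (hs : B.addsRed d s) :
    s ∉ R := by
  rcases h.not_addsRed_or_adj_not_mem hd with hno | hlow
  · exact absurd hs (hno s)
  · exact h.sat.compl.mem_of_sameComp hlow hs.2

lemma preRealize (h : RunInv c₀ R B (d :: t)) (hdt : d ∉ t) :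
    RunInv c₀ R (B.preRealize d) t where
  sat u s s' ha ha' hs := by
    have hd := h.rem_inactive d List.mem_cons_self
    by_cases hud : u = d
    · subst hud
      exact absurd hs (h.addsRed_not_mem hd (preRealize_adj_self hd ha))
    · exact h.sat u s s' (preRealize_adj_of_ne hud ha) (preRealize_adj_of_ne hud ha') hs
  mono := h.mono.preRealize d
  black_full u s s' hb hs hs' := ⟨h.black_full u s s' hb.1 hs hs', hb.2⟩
  c_black s hb := h.c_black s hb.1
  c_inactive := by
    rintro ⟨s, hr | ⟨rfl, hst⟩⟩
    · exact h.c_inactive ⟨s, hr⟩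
    · exact h.c_not_addsRed List.mem_cons_self hst
  c_full hc s hs := ⟨h.c_full (List.mem_cons_of_mem d hc) s hs, fun hcd => hdt (hcd ▸ hc)⟩
  rem_inactive e he := by
    rintro ⟨s, hr | ⟨rfl, -⟩⟩
    · exact h.rem_inactive e (List.mem_cons_of_mem d he) ⟨s, hr⟩
    · exact hdt he

lemma realize [Fintype C] (h : RunInv c₀ R B (d :: t)) (hdt : d ∉ t) :
    RunInv c₀ R (B.realize d) t :=
  (h.preRealize hdt).prune

end RunInv

/-- `A` is the run that realized `c₀` early, `B` the original run: `A` is `B` without the black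
edges of `c₀`, except that characters whose red neighbourhood in `B` lies in `R` may already be
gone in `A`. -/
structure Sim (c₀ : C) (R : Set S) (A B : RBGraph S C) : Prop where
  black_iff : ∀ u s, A.black u s ↔ B.black u s ∧ u ≠ c₀
  red_imp : ∀ u s, A.red u s → B.red u s
  red_cases : ∀ u, (∀ s, A.red u s ↔ B.red u s) ∨ (A.inactive u ∧ ∀ s, B.red u s → s ∈ R)

namespace Sim

variable {c₀ d u : C} {R : Set S} {A B : RBGraph S C} {rem t : List C} {s : S}

lemma adj (h : Sim c₀ R A B) (ha : A.adj u s) : B.adj u s :=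
  ha.imp (fun hb => ((h.black_iff u s).1 hb).1) (h.red_imp u s)

lemma le (h : Sim c₀ R A B) : A.toSimple ≤ B.toSimple :=
  toSimple_mono fun _ _ => h.adj

lemma monochromatic (h : Sim c₀ R A B) (hB : B.monochromatic) : A.monochromatic :=
  fun u s s' hr hb => hB u s s' (h.red_imp u s hr) ((h.black_iff u s').1 hb).1

lemma inactive (h : Sim c₀ R A B) (hu : B.inactive u) : A.inactive u :=
  fun ⟨s, hs⟩ => hu ⟨s, h.red_imp u s hs⟩

lemma redUniversal (h : Sim c₀ R A B) (hU : B.redUniversal u) (hr : A.red u s) :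
    A.redUniversal u :=
  (h.red_cases u).elim (fun heq => redUniversal_of_le h.le heq hU) fun hA => absurd ⟨s, hr⟩ hA.1

lemma adj_of_not_mem (h : Sim c₀ R A B) (hB : RunInv c₀ R B rem) (hs : s ∉ R)
    (ha : B.adj u s) : A.adj u s := by
  have hu : u ≠ c₀ := by
    rintro rfl
    exact hs (hB.c_adj ha)
  refine ha.imp (fun hb => (h.black_iff u s).2 ⟨hb, hu⟩) fun hr => ?_
  rcases h.red_cases u with heq | ⟨-, hR⟩
  · exact (heq s).2 hr
  · exact absurd (hR s hr) hs

/-- Outside `R` the two runs have the same edges. -/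
lemma reachable_of_adj_not_mem (h : Sim c₀ R A B) (hB : RunInv c₀ R B rem)
    (hd : ∀ s, B.adj d s → s ∉ R) {y : S ⊕ C} (hy : B.toSimple.Reachable (.inr d) y) :
    A.toSimple.Reachable (.inr d) y := by
  have hlow : ∀ s, B.sameComp d s → s ∉ R := fun s => hB.sat.compl.mem_of_sameComp hd
  refine (SimpleGraph.Reachable.induction_adj
    (P := fun y => B.toSimple.Reachable (.inr d) y ∧ A.toSimple.Reachable (.inr d) y)
    ?_ hy ⟨.rfl, .rfl⟩).2
  rintro x y (⟨s, u, rfl, rfl, ha⟩ | ⟨s, u, rfl, rfl, ha⟩) ⟨hBx, hAx⟩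
  · exact ⟨hBx.trans (toSimple_adj_inl ha).reachable,
      hAx.trans (toSimple_adj_inl (h.adj_of_not_mem hB (hlow s hBx) ha)).reachable⟩
  · have hBy := hBx.trans (toSimple_adj_inr ha).reachable
    exact ⟨hBy, hAx.trans (toSimple_adj_inr (h.adj_of_not_mem hB (hlow s hBy) ha)).reachable⟩

lemma addsRed_iff (h : Sim c₀ R A B) (hB : RunInv c₀ R B (d :: t)) (hdc : d ≠ c₀) :
    A.addsRed d s ↔ B.addsRed d s := by
  refine ⟨fun ⟨hnb, hsc⟩ => ⟨fun hb => hnb ((h.black_iff d s).2 ⟨hb, hdc⟩), hsc.mono h.le⟩,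
    fun hst => ⟨fun hb => hst.1 ((h.black_iff d s).1 hb).1, ?_⟩⟩
  rcases hB.not_addsRed_or_adj_not_mem (hB.rem_inactive d List.mem_cons_self) with hno | hlow
  · exact absurd hst (hno s)
  · exact h.reachable_of_adj_not_mem hB hlow hst.2

/-- Otherwise the neighbourhood of `u` would lie outside `R`, where the components of `u` in `A`
and `B` coincide. -/
lemma mem_of_redUniversal (h : Sim c₀ R A B) (hB : RunInv c₀ R B rem)
    (heq : ∀ s, A.red u s ↔ B.red u s) (hA : A.redUniversal u) (hnB : ¬ B.redUniversal u)
    (hr : B.red u s) : s ∈ R := by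
  by_contra hs
  have hlow : ∀ s', B.adj u s' → s' ∉ R := fun s' ha hs' => hs (hB.sat u s' s ha (.inr hr) hs')
  obtain ⟨⟨s₀, hs₀⟩, hall⟩ := hA
  exact hnB ⟨⟨s₀, (heq s₀).1 hs₀⟩, fun s' hs' =>
    (heq s').1 (hall s' (h.reachable_of_adj_not_mem hB hlow hs'))⟩

lemma pruneStep (h : Sim c₀ R A B) (hB : RunInv c₀ R B rem) :
    Sim c₀ R (pruneStep A) (pruneStep B) where
  black_iff u s := by
    refine ⟨fun ⟨hb, _⟩ => ?_, fun ⟨⟨hb, _⟩, hu⟩ => ?_⟩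
    · obtain ⟨hb', hu⟩ := (h.black_iff u s).1 hb
      exact ⟨⟨hb', not_redUniversal_of_black hB.mono hb'⟩, hu⟩
    · have hb' := (h.black_iff u s).2 ⟨hb, hu⟩
      exact ⟨hb', not_redUniversal_of_black (h.monochromatic hB.mono) hb'⟩
  red_imp u s := fun ⟨hr, hnA⟩ => ⟨h.red_imp u s hr, fun hU => hnA (h.redUniversal hU hr)⟩
  red_cases u := by
    rcases h.red_cases u with heq | ⟨hA, hR⟩
    · by_cases hAU : A.redUniversal u
      · exact .inr ⟨fun ⟨_, hs⟩ => hs.2 hAU, fun s ⟨hr, hnB⟩ =>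
          h.mem_of_redUniversal hB heq hAU hnB hr⟩
      · exact .inl fun s => ⟨fun ⟨hr, _⟩ => ⟨(heq s).1 hr, fun hU => hAU (h.redUniversal hU hr)⟩,
          fun ⟨hr, _⟩ => ⟨(heq s).2 hr, hAU⟩⟩
    · exact .inr ⟨inactive_pruneStep hA, fun s hs => hR s hs.1⟩

lemma prune [Fintype C] (h : Sim c₀ R A B) (hB : RunInv c₀ R B rem) :
    Sim c₀ R (prune A) (prune B) := by
  suffices ∀ n (A B : RBGraph S C), Sim c₀ R A B → RunInv c₀ R B rem →
      Sim c₀ R (RBGraph.pruneStep^[n] A) (RBGraph.pruneStep^[n] B) from this _ A B h hB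
  intro n
  induction n with
  | zero => exact fun _ _ h _ => h
  | succ n ih => exact fun A B h hB => ih _ _ (h.pruneStep hB) hB.pruneStep

lemma preRealize (h : Sim c₀ R A B) (hB : RunInv c₀ R B (d :: t)) (hdc : d ≠ c₀) :
    Sim c₀ R (A.preRealize d) (B.preRealize d) where
  black_iff u s := by
    simp only [RBGraph.preRealize, h.black_iff u s]
    tauto
  red_imp u s := Or.imp (h.red_imp u s) fun ⟨hu, hst⟩ => ⟨hu, (h.addsRed_iff hB hdc).1 hst⟩
  red_cases u := by
    by_cases hud : u = d
    · subst hud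
      have hdB := hB.rem_inactive u List.mem_cons_self
      exact .inl fun s => by
        rw [preRealize_red_self hdB, preRealize_red_self (h.inactive hdB), h.addsRed_iff hB hdc]
    · simp only [RBGraph.inactive, RBGraph.active, preRealize_red_of_ne hud]
      exact h.red_cases u

lemma realize [Fintype C] (h : Sim c₀ R A B) (hB : RunInv c₀ R B (d :: t)) (hdt : d ∉ t)
    (hdc : d ≠ c₀) : Sim c₀ R (A.realize d) (B.realize d) :=
  (h.preRealize hB hdc).prune (hB.preRealize hdt)

lemma realize_right [Fintype C] (h : Sim c₀ R A B) (hB : RunInv c₀ R B (c₀ :: t))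
    (hct : c₀ ∉ t) (hA : A.pruned) : Sim c₀ R A (B.realize c₀) := by
  have hno : ∀ s, ¬ B.addsRed c₀ s := fun _ => hB.c_not_addsRed List.mem_cons_self
  have hpre : Sim c₀ R A (B.preRealize c₀) := by
    refine ⟨fun u s => ?_, ?_, ?_⟩
    · rw [show (B.preRealize c₀).black u s ↔ B.black u s ∧ u ≠ c₀ from Iff.rfl, h.black_iff,
        and_assoc, and_self]
    · simpa only [preRealize_red_of_not_addsRed hno] using h.red_imp
    · simpa only [preRealize_red_of_not_addsRed hno] using h.red_cases
  have := hpre.prune (hB.preRealize hct)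
  rwa [prune_eq_self hA] at this

lemma of_realize [Fintype C] (hB : RunInv c₀ R B rem) (hc : c₀ ∈ rem) (hBp : B.pruned) :
    Sim c₀ R (B.realize c₀) B := by
  have hno : ∀ s, ¬ B.addsRed c₀ s := fun _ => hB.c_not_addsRed hc
  have hpre : Sim c₀ R (B.preRealize c₀) B :=
    ⟨fun _ _ => Iff.rfl, fun _ _ => (preRealize_red_of_not_addsRed hno).1,
      fun _ => Or.inl fun _ => preRealize_red_of_not_addsRed hno⟩
  have := hpre.prune hB
  rwa [prune_eq_self hBp] at this

lemma edgeless (h : Sim c₀ R A B) (hB : B.edgeless) : A.edgeless :=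
  fun u s ha => hB u s (h.adj ha)

lemma redSigma (h : Sim c₀ R A B) (hB : B.monochromatic) (hA : A.redSigma) : B.redSigma := by
  obtain ⟨c1, c2, s1, s2, s3, hc, h12, h23, h13, r11, r12, r22, r23, na13, na21⟩ := hA
  have e1 := (h.red_cases c1).resolve_right fun h' => h'.1 ⟨s1, r11⟩
  have e2 := (h.red_cases c2).resolve_right fun h' => h'.1 ⟨s2, r22⟩
  refine ⟨c1, c2, s1, s2, s3, hc, h12, h23, h13,
    (e1 _).1 r11, (e1 _).1 r12, (e2 _).1 r22, (e2 _).1 r23, ?_, ?_⟩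
  · rintro (hb | hr)
    · exact hB c1 s1 s3 ((e1 s1).1 r11) hb
    · exact na13 (.inr ((e1 s3).2 hr))
  · rintro (hb | hr)
    · exact hB c2 s2 s1 ((e2 s2).1 r22) hb
    · exact na21 (.inr ((e2 s1).2 hr))

end Sim

section Reduces

variable [Fintype C] {G : RBGraph S C}

lemma reduces_nil : G.reduces [] ↔ G.edgeless ∧ ¬ G.redSigma := by
  simp [reduces, realizeSeq]

lemma reduces_cons {d : C} {t : List C} :
    G.reduces (d :: t) ↔ ¬ G.redSigma ∧ (G.realize d).reduces t := by
  refine ⟨fun ⟨hel, hsig⟩ => ⟨hsig 0, hel, fun i => hsig (i + 1)⟩,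
    fun ⟨hG, hel, hsig⟩ => ⟨hel, fun i => ?_⟩⟩
  cases i with
  | zero => exact hG
  | succ i => exact hsig i

lemma Sim.reduces_filter {c₀ : C} {R : Set S} :
    ∀ {m : List C} {A B : RBGraph S C}, Sim c₀ R A B → RunInv c₀ R B m → A.pruned →
      m.Nodup → B.reduces m → A.reduces (m.filter (· ≠ c₀))
  | [], _, _, h, hB, _, _, hred => by
    rw [List.filter_nil, reduces_nil]
    rw [reduces_nil] at hred
    exact ⟨h.edgeless hred.1, mt (h.redSigma hB.mono) hred.2⟩
  | d :: t, A, B, h, hB, hA, hnd, hred => by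
    rw [List.nodup_cons] at hnd
    rw [reduces_cons] at hred
    by_cases hdc : d = c₀
    · subst hdc
      simpa using
        (h.realize_right hB hnd.1 hA).reduces_filter (hB.realize hnd.1) hA hnd.2 hred.2
    · rw [List.filter_cons_of_pos (by simpa using hdc), reduces_cons]
      exact ⟨mt (h.redSigma hB.mono) hred.1, (h.realize hB hnd.1 hdc).reduces_filter
        (hB.realize hnd.1) (pruned_realize A d) hnd.2 hred.2⟩

end Reduces

section PartialReduction

variable [Fintype C] {M : C → S → Prop} {l : List C} {k : ℕ}

lemma isReduction.not_redSigma (hl : isReduction M l) (j : ℕ) :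
    ¬ (realizeSeq (ofMatrix M) (l.take j)).redSigma := by
  rcases le_total j l.length with hj | hj
  · exact hl.2.2.2 j hj
  · rw [List.take_of_length_le hj, ← List.take_length (l := l)]
    exact hl.2.2.2 _ le_rfl

lemma isReduction.reduces_drop (hl : isReduction M l) (k : ℕ) :
    (partialRed M l k).reduces (l.drop k) := by
  refine ⟨?_, fun i => ?_⟩
  · rw [partialRed, ← realizeSeq_append, List.take_append_drop]
    exact hl.2.2.1
  · rw [partialRed, ← realizeSeq_append, ← List.take_add]
    exact hl.not_redSigma _

lemma isReduction.mem_drop_of_black (hl : isReduction M l) {u : C} {s : S}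
    (hb : (partialRed M l k).black u s) : u ∈ l.drop k := by
  have hu := hl.2.1 u
  rw [← List.take_append_drop k l, List.mem_append] at hu
  exact hu.resolve_left fun h => not_black_realizeSeq_of_mem h hb

lemma isReduction.inactive_of_mem_drop (hl : isReduction M l) {u : C} (hu : u ∈ l.drop k) :
    (partialRed M l k).inactive u := by
  refine inactive_realizeSeq_of_not_mem (fun h => ?_) fun ⟨_, h⟩ => h
  have hnd := hl.1
  rw [← List.take_append_drop k l, List.nodup_append] at hnd
  exact hnd.2.2 u h u hu rfl

lemma isReduction.runInv (hl : isReduction M l) (hCI : (partialRed M l k).CI = ∅)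
    (hCU : (partialRed M l k).CU = ∅) {c : C} (hc : c ∈ (partialRed M l k).CC) :
    RunInv c (partialRed M l k).SR (partialRed M l k) (l.drop k) := by
  obtain ⟨hcin, ⟨s₀, hs₀⟩, hcR⟩ := hc
  have hmono := (monochromatic_ofMatrix M).realizeSeq (l.take k)
  exact ⟨saturated_SR hmono hCI hCU, hmono,
    fun _ _ _ => black_full_of_CI_eq_empty hmono hCI, hcR, hcin,
    fun _ _ hs => black_full_of_CI_eq_empty hmono hCI hs₀ (hcR s₀ hs₀) hs,
    fun _ => hl.inactive_of_mem_drop⟩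

end PartialReduction

end RBGraph

theorem CC_safe_general {S C : Type} [Fintype C] (M : C → S → Prop)
    (l : List C) (hl : RBGraph.isReduction M l) (k : ℕ)
    (Gk : RBGraph S C) (hGk : Gk = RBGraph.partialRed M l k)
    (hCI : Gk.CI = ∅) (hCU : Gk.CU = ∅) :
    ∀ c ∈ Gk.CC, Gk.safe c := by
  subst hGk
  intro c hc
  have hrun := hl.runInv hCI hCU hc
  obtain ⟨s₀, hs₀⟩ := hc.2.1
  have hnd : (l.drop k).Nodup := hl.1.sublist (List.drop_sublist k l)
  have hsim := RBGraph.Sim.of_realize hrun (hl.mem_drop_of_black hs₀)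
    (RBGraph.pruned_realizeSeq _ (RBGraph.pruned_ofMatrix M))
  have hred := hsim.reduces_filter hrun (RBGraph.pruned_realize _ c) hnd (hl.reduces_drop k)
  refine ⟨(l.drop k).filter (· ≠ c), hnd.filter _,
    fun e _ ⟨s, hs⟩ => ?_, fun e he => ?_, hred.1, fun i _ => hred.2 i⟩
  · obtain ⟨hb, hec⟩ := RBGraph.realize_black hs
    simpa [hec] using hl.mem_drop_of_black hb
  · exact hsim.inactive (hl.inactive_of_mem_drop (List.mem_of_mem_filter he))

/-- if `C_R ≠ ∅`, `C_I = ∅` and `C_U = ∅`, every character of `C_C`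
is safe. -/
theorem CC_safe {S C : Type} [Fintype C] (M : C → S → Prop)
    (hmax : RBGraph.MaximalM M) (hconn : (RBGraph.ofMatrix M).toSimple.Connected)
    (l : List C) (hl : RBGraph.isReduction M l) (k : ℕ) (hk : k ≤ l.length)
    (Gk : RBGraph S C) (hGk : Gk = RBGraph.partialRed M l k)
    (hCR : ∃ c, Gk.active c) (hCI : Gk.CI = ∅) (hCU : Gk.CU = ∅) :
    ∀ c ∈ Gk.CC, Gk.safe c :=
  CC_safe_general M l hl k Gk hGk hCI hCU
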